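/- Let U ⊆ S^m_d be a quasi-stable monomial module and G a P(U)-marked set. The following conditions are equivalent: (i) G is a P(U)-marked basis, i.e. (S^m_d)_s = ⟨G⟩_s ⊕ ⟨N(U)_s⟩^A for every degree s; (ii) ⟨G⟩_s = ⟨G^{(s)}⟩^A for every degree s; (iii) N(U,⟨G⟩) = ⟨G⟩ ∩ ⟨N(U)⟩ = {0}. -/

import Mathlib

open MvPolynomial

namespace MB

/-- Exponent (multi-index) of a term in the variables `x_0, …, x_n`. -/
abbrev Exp (n : ℕ) := Fin (n+1) →₀ ℕ

variable {n : ℕ}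

/-- Total degree of a term. -/
def degE (α : Exp n) : ℕ := α.sum fun _ e => e

/-- `x_i` is a multiplicative variable for the term `x^α`, i.e. `x_i ≤ min(x^α)`. -/
def mult (α : Exp n) (i : Fin (n+1)) : Prop := ∀ j ∈ α.support, i ≤ j

/-- Every variable occurring in `x^δ` is multiplicative for `x^α`. -/
def multExp (α δ : Exp n) : Prop := ∀ i ∈ δ.support, mult α i

/-- Pommaret cone of a term. -/
def pommaretCone (α : Exp n) : Set (Exp n) := {γ | ∃ δ, multExp α δ ∧ γ = α + δ}

/-- A set of terms is (the set of terms of) a monomial ideal. -/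
def IsMonomialIdeal (T : Set (Exp n)) : Prop := ∀ α ∈ T, ∀ β, α + β ∈ T

/-- `P` is a Pommaret basis of the set of terms `T`: the terms of `T` are the
disjoint union of the Pommaret cones of the elements of `P`. -/
def IsPommaretBasis (P : Finset (Exp n)) (T : Set (Exp n)) : Prop :=
  (∀ γ, γ ∈ T ↔ ∃ α ∈ P, γ ∈ pommaretCone α) ∧
  ∀ γ : Exp n, ∀ α ∈ P, ∀ β ∈ P, γ ∈ pommaretCone α → γ ∈ pommaretCone β → α = β

/-- Lexicographic order on terms (with `x_n > … > x_0` significance). -/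
def lexLt (η δ : Exp n) : Prop := ∃ i, η i < δ i ∧ ∀ j, i < j → η j = δ j

/-- Terms of the saturation `(J : (x_0,…,x_n)^∞)` of a monomial ideal. -/
def satTerms (T : Set (Exp n)) : Set (Exp n) :=
  {α | ∃ j : ℕ, ∀ β : Exp n, degE β = j → α + β ∈ T}

section ModuleDefs

variable (A : Type*) [CommRing A] {κ : Type*} [Fintype κ] [DecidableEq κ]

/-- The term `x^α e_k` of the free module. -/
noncomputable def termV (α : Exp n) (k : κ) : κ → MvPolynomial (Fin (n+1)) A :=
  Pi.single k (monomial α 1)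

variable {A}

/-- Homogeneity of degree `s` in `S^m_d` (with weight vector `d`). -/
def IsHomogV (d : κ → ℤ) (f : κ → MvPolynomial (Fin (n+1)) A) (s : ℤ) : Prop :=
  ∀ k, ∀ β ∈ (f k).support, (degE β : ℤ) + d k = s

variable (A)

/-- The degree-`s` component `(S^m_d)_s` as an `A`-submodule. -/
noncomputable def homogCompV (d : κ → ℤ) (s : ℤ) :
    Submodule A (κ → MvPolynomial (Fin (n+1)) A) where
  carrier := {f | IsHomogV d f s}
  add_mem' := by
    intro f g hf hg k β hβ
    rcases Finset.mem_union.mp (MvPolynomial.support_add hβ) with h | h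
    · exact hf k β h
    · exact hg k β h
  zero_mem' := by intro k β hβ; simp at hβ
  smul_mem' := by
    intro a f hf k β hβ
    exact hf k β (MvPolynomial.support_smul hβ)

/-- The set `N(U)` of terms of `S^m_d` not belonging to the monomial module `U = ⊕ J^(k) e_k`. -/
def NUTerms (J : κ → Set (Exp n)) : Set (κ → MvPolynomial (Fin (n+1)) A) :=
  {v | ∃ k, ∃ α, α ∉ J k ∧ v = termV A α k}

/-- The degree-`s` part `N(U)_s`. -/
def NUTermsDeg (d : κ → ℤ) (J : κ → Set (Exp n)) (s : ℤ) :
    Set (κ → MvPolynomial (Fin (n+1)) A) :=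
  {v | ∃ k, ∃ α, α ∉ J k ∧ (degE α : ℤ) + d k = s ∧ v = termV A α k}

variable {A}

/-- A `P(U)`-marked set: for each `x^α e_k` with `α ∈ P k`, the element `g α k` has
head term `x^α e_k` (coefficient `1`) and all other terms in `N(U)` of the same degree. -/
def IsMarkedSetV (d : κ → ℤ) (J : κ → Set (Exp n)) (P : κ → Finset (Exp n))
    (g : Exp n → κ → (κ → MvPolynomial (Fin (n+1)) A)) : Prop :=
  ∀ k, ∀ α ∈ P k, ∀ l, ∀ β ∈ ((g α k - termV A α k) l).support,
    β ∉ J l ∧ (degE β : ℤ) + d l = (degE α : ℤ) + d k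

/-- The underlying set of elements of the marked set `G`. -/
def GSet (P : κ → Finset (Exp n)) (g : Exp n → κ → (κ → MvPolynomial (Fin (n+1)) A)) :
    Set (κ → MvPolynomial (Fin (n+1)) A) :=
  {v | ∃ k, ∃ α ∈ P k, v = g α k}

/-- The set `G^(s)` of multiplicative multiples of elements of `G` of degree `s`. -/
def GSdeg (d : κ → ℤ) (P : κ → Finset (Exp n))
    (g : Exp n → κ → (κ → MvPolynomial (Fin (n+1)) A)) (s : ℤ) :
    Set (κ → MvPolynomial (Fin (n+1)) A) :=
  {v | ∃ k, ∃ α ∈ P k, ∃ δ : Exp n, multExp α δ ∧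
    (degE δ : ℤ) + (degE α : ℤ) + d k = s ∧ v = (monomial δ (1:A)) • g α k}

/-- The `S`-submodule `⟨G⟩` generated by the marked set. -/
noncomputable def GmodS (P : κ → Finset (Exp n))
    (g : Exp n → κ → (κ → MvPolynomial (Fin (n+1)) A)) :
    Submodule (MvPolynomial (Fin (n+1)) A) (κ → MvPolynomial (Fin (n+1)) A) :=
  Submodule.span _ (GSet P g)

/-- The degree-`s` component `⟨G⟩_s` as an `A`-submodule. -/
noncomputable def GmodDeg (d : κ → ℤ) (P : κ → Finset (Exp n))
    (g : Exp n → κ → (κ → MvPolynomial (Fin (n+1)) A)) (s : ℤ) :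
    Submodule A (κ → MvPolynomial (Fin (n+1)) A) :=
  (GmodS P g).restrictScalars A ⊓ homogCompV A d s

/-- `G` is a marked basis: `(S^m_d)_s = ⟨G⟩_s ⊕ ⟨N(U)_s⟩^A` for every degree `s`. -/
def MarkedBasisProp (d : κ → ℤ) (J : κ → Set (Exp n)) (P : κ → Finset (Exp n))
    (g : Exp n → κ → (κ → MvPolynomial (Fin (n+1)) A)) : Prop :=
  ∀ s : ℤ,
    homogCompV A d s = GmodDeg d P g s ⊔ Submodule.span A (NUTermsDeg A d J s) ∧
    GmodDeg d P g s ⊓ Submodule.span A (NUTermsDeg A d J s) = ⊥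

/-- One step of the reduction relation `→_G`. -/
def RedStep (P : κ → Finset (Exp n)) (g : Exp n → κ → (κ → MvPolynomial (Fin (n+1)) A))
    (h h' : κ → MvPolynomial (Fin (n+1)) A) : Prop :=
  ∃ k, ∃ α ∈ P k, ∃ η : Exp n, multExp α η ∧
    (h k).coeff (η + α) ≠ 0 ∧
    h' = h - ((h k).coeff (η + α)) • ((monomial η (1:A)) • g α k)

end ModuleDefs

section IdealDefs

variable {A : Type*} [CommRing A]

/-- A `P(J)`-marked set of polynomials. -/
def IsMarkedSetI (T : Set (Exp n)) (P : Finset (Exp n))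
    (g : Exp n → MvPolynomial (Fin (n+1)) A) : Prop :=
  ∀ α ∈ P, ∀ β ∈ (g α - monomial α (1:A)).support, β ∉ T ∧ degE β = degE α

variable (A)

/-- The degree-`s` monomials not in `T`. -/
def NTermsDegI (T : Set (Exp n)) (s : ℕ) : Set (MvPolynomial (Fin (n+1)) A) :=
  {p | ∃ β, β ∉ T ∧ degE β = s ∧ p = monomial β (1:A)}

variable {A}

/-- Degree-`s` part of the ideal generated by the marked set. -/
noncomputable def IdealDegI (P : Finset (Exp n)) (g : Exp n → MvPolynomial (Fin (n+1)) A)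
    (s : ℕ) : Submodule A (MvPolynomial (Fin (n+1)) A) :=
  (Ideal.span (g '' ↑P)).restrictScalars A ⊓ homogeneousSubmodule (Fin (n+1)) A s

/-- A `P(J)`-marked basis of polynomials: `S_s = (G)_s ⊕ ⟨N(J)_s⟩^A` for all `s`. -/
def IsMarkedBasisI (T : Set (Exp n)) (P : Finset (Exp n))
    (g : Exp n → MvPolynomial (Fin (n+1)) A) : Prop :=
  IsMarkedSetI T P g ∧ ∀ s : ℕ,
    homogeneousSubmodule (Fin (n+1)) A s
      = IdealDegI P g s ⊔ Submodule.span A (NTermsDegI A T s) ∧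
    IdealDegI P g s ⊓ Submodule.span A (NTermsDegI A T s) = ⊥

/-- The polynomial `p` involves only multiplicative variables of `x^α`. -/
def multPoly (α : Exp n) (p : MvPolynomial (Fin (n+1)) A) : Prop :=
  ∀ β ∈ p.support, multExp α β

end IdealDefs

section SyzDefs

variable {A : Type*} [CommRing A]

/-- The map `(c_l) ↦ Σ_l c_l f_{α(l)}` whose kernel is `Syz(G)`. -/
noncomputable def syzMap (P : Finset (Exp n)) (g : Exp n → MvPolynomial (Fin (n+1)) A) :
    (↥P → MvPolynomial (Fin (n+1)) A) →ₗ[MvPolynomial (Fin (n+1)) A]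
      MvPolynomial (Fin (n+1)) A where
  toFun c := ∑ l : ↥P, c l * g l.1
  map_add' c c' := by simp [add_mul, Finset.sum_add_distrib]
  map_smul' a c := by simp [Finset.mul_sum, mul_assoc]

/-- Weight vector for the syzygy module: `d_l = deg x^{α(l)}`. -/
def ddeg (P : Finset (Exp n)) : ↥P → ℤ := fun l => (degE l.1 : ℤ)

/-- Terms of the monomial ideal generated by the nonmultiplicative variables of `x^{α(l)}`. -/
def Jsyz (P : Finset (Exp n)) : ↥P → Set (Exp n) :=
  fun l => {β | ∃ i ∈ β.support, ¬ mult (l : Exp n) i}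

open Classical in
/-- The claimed Pommaret basis `{x_i e_l : x_i nonmultiplicative for x^{α(l)}}`. -/
noncomputable def Psyz (P : Finset (Exp n)) : ↥P → Finset (Exp n) := fun l =>
  (Finset.univ.filter fun i : Fin (n+1) => ¬ mult (l : Exp n) i).image
    fun i => Finsupp.single i 1

open Classical in
/-- The syzygy `S_{k;i} = x_i e_k − Σ_l P_l^{k;i} e_l`. -/
noncomputable def Ssyz (P : Finset (Exp n))
    (Pc : ↥P → Fin (n+1) → ↥P → MvPolynomial (Fin (n+1)) A)
    (k : ↥P) (i : Fin (n+1)) : ↥P → MvPolynomial (Fin (n+1)) A :=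
  fun l => (if l = k then (X i : MvPolynomial (Fin (n+1)) A) else 0) - Pc k i l

/-- The set `G_Syz^(s)`. -/
def GSyzDeg (P : Finset (Exp n))
    (Pc : ↥P → Fin (n+1) → ↥P → MvPolynomial (Fin (n+1)) A) (s : ℤ) :
    Set (↥P → MvPolynomial (Fin (n+1)) A) :=
  {v | ∃ k : ↥P, ∃ i : Fin (n+1), ¬ mult (k : Exp n) i ∧ ∃ δ : Exp n,
    (∀ j ∈ δ.support, j ≤ i) ∧ (degE δ : ℤ) + 1 + ddeg P k = s ∧
    v = (monomial δ (1:A)) • Ssyz P Pc k i}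

end SyzDefs

/-!
Reducing a term `x^(α+δ) e_k` of `U` by the multiplicative multiple `x^δ f_α^k` leaves only terms
of `N(U)` and terms of `U` whose multiplicative parts are lex-smaller than `x^δ`, so the reduction
terminates and `(S^m_d)_s = ⟨G^(s)⟩^A + ⟨N(U)_s⟩^A` for every marked set. The elements of `G^(s)`
have pairwise distinct head terms in `U` and are triangular with respect to them (ordered by the
lex order of their multiplicative parts), so a nonzero `A`-combination of them has a term in `U`:
`⟨G^(s)⟩^A ∩ ⟨N(U)⟩^A = 0`. Hence (i) and (iii) both reduce to `⟨G⟩_s ∩ ⟨N(U)_s⟩^A = 0` for all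
`s`, which is equivalent to `⟨G⟩_s = ⟨G^(s)⟩^A`; for (iii) one uses that `⟨G⟩` is graded.
-/

section Pommaret

variable {P : Finset (Exp n)} {T : Set (Exp n)} {α α' β δ δ' : Exp n}

theorem lexLt_iff_toColex_lt {η δ : Exp n} : lexLt η δ ↔ toColex η < toColex δ := by
  rw [Finsupp.Colex.lt_iff]
  exact exists_congr fun _ => and_comm

theorem wellFounded_lexLt : WellFounded (lexLt (n := n)) :=
  Subrelation.wf lexLt_iff_toColex_lt.mp (InvImage.wf toColex wellFounded_lt)

theorem degE_add (α β : Exp n) : degE (α + β) = degE α + degE β :=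
  map_add Finsupp.degree α β

theorem multExp_zero (α : Exp n) : multExp α 0 := fun i hi => by simp at hi

theorem IsPommaretBasis.add_mem (hP : IsPommaretBasis P T) (hα : α ∈ P) (hδ : multExp α δ) :
    α + δ ∈ T :=
  (hP.1 _).2 ⟨α, hα, δ, hδ, rfl⟩

theorem IsPommaretBasis.mem (hP : IsPommaretBasis P T) (hα : α ∈ P) : α ∈ T := by
  simpa using hP.add_mem hα (multExp_zero α)

theorem IsPommaretBasis.eq_of_add_eq (hP : IsPommaretBasis P T) (hα : α ∈ P)
    (hδ : multExp α δ) (hα' : α' ∈ P) (hδ' : multExp α' δ') (h : α + δ = α' + δ') :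
    α = α' ∧ δ = δ' := by
  obtain rfl := hP.2 _ α hα α' hα' ⟨δ, hδ, rfl⟩ ⟨δ', hδ', h⟩
  exact ⟨rfl, add_left_cancel h⟩

theorem IsPommaretBasis.lexLt_of_add_eq (hT : IsMonomialIdeal T) (hP : IsPommaretBasis P T)
    (hα : α ∈ P) (hδ' : multExp α δ') (hβ : β ∉ T) (h : δ + β = α + δ') : lexLt δ' δ := by
  rcases lt_trichotomy (toColex δ') (toColex δ) with hlt | heq | hgt
  · exact lexLt_iff_toColex_lt.2 hlt
  · obtain rfl : δ' = δ := toColex.injective heq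
    obtain rfl : β = α := add_left_cancel (h.trans (add_comm α δ'))
    exact absurd (hP.mem hα) hβ
  · obtain ⟨i, hi, habove⟩ := lexLt_iff_toColex_lt.2 hgt
    have hmult : mult α i := hδ' i (Finsupp.mem_support_iff.2 (by omega))
    have hle : α ≤ β := Finsupp.le_def.2 fun j => by
      have hj : δ j + β j = α j + δ' j := by simpa using congrArg (· j) h
      rcases lt_trichotomy i j with hij | rfl | hji
      · have := habove j hij
        omega
      · omega
      · have : α j = 0 :=
          Finsupp.notMem_support_iff.1 fun hj' => absurd (hmult j hj') (not_le.2 hji)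
        omega
    exact absurd (add_tsub_cancel_of_le hle ▸ hT α (hP.mem hα) (β - α)) hβ

end Pommaret

section FreeModule

variable {κ : Type*} {A : Type*} [CommRing A]

theorem exists_eq_add_of_mem_support_monomial_mul {σ : Type*} {δ η : σ →₀ ℕ} {c : A}
    {p : MvPolynomial σ A} (hη : η ∈ (monomial δ c * p).support) :
    ∃ β ∈ p.support, η = δ + β := by
  rw [mem_support_iff, coeff_monomial_mul'] at hη
  split_ifs at hη with hle
  · exact ⟨η - δ, mem_support_iff.2 (right_ne_zero_of_mul hη), (add_tsub_cancel_of_le hle).symm⟩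
  · exact absurd rfl hη

theorem monomial_smul_mem_homogCompV {d : κ → ℤ} {t : ℤ} {v : κ → MvPolynomial (Fin (n+1)) A}
    (hv : v ∈ homogCompV A d t) (δ : Exp n) (c : A) :
    monomial δ c • v ∈ homogCompV A d ((degE δ : ℤ) + t) := by
  intro l η hη
  obtain ⟨β, hβ, rfl⟩ := exists_eq_add_of_mem_support_monomial_mul hη
  rw [degE_add, Nat.cast_add, add_assoc, hv l β hβ]

variable (A) in
/-- `⟨N(U)⟩^A`: the elements all of whose terms lie outside `U`. -/
def nuSupported (J : κ → Set (Exp n)) : Submodule A (κ → MvPolynomial (Fin (n+1)) A) where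
  carrier := {v | ∀ l, ∀ β ∈ (v l).support, β ∉ J l}
  add_mem' hf hg l β hβ := (Finset.mem_union.1 (support_add hβ)).elim (hf l β) (hg l β)
  zero_mem' l β hβ := by simp at hβ
  smul_mem' _ _ hf l β hβ := hf l β (support_smul hβ)

variable [DecidableEq κ]

theorem coeff_termV (α : Exp n) (k l : κ) (β : Exp n) :
    coeff β (termV A α k l) = if l = k ∧ β = α then 1 else 0 := by
  by_cases hl : l = k
  · subst hl
    simp [termV, coeff_monomial, eq_comm]
  · simp [termV, hl]

theorem monomial_smul_termV (δ α : Exp n) (k : κ) :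
    monomial δ (1 : A) • termV A α k = termV A (δ + α) k := by
  rw [termV, termV, ← Pi.single_smul, smul_eq_mul, monomial_mul, one_mul]

theorem mem_of_forall_termV_mem [Fintype κ] {M : Submodule A (κ → MvPolynomial (Fin (n+1)) A)}
    {v : κ → MvPolynomial (Fin (n+1)) A} (h : ∀ l, ∀ β ∈ (v l).support, termV A β l ∈ M) :
    v ∈ M := by
  rw [← Finset.univ_sum_single v]
  refine sum_mem fun l _ => ?_
  have hl : Pi.single l (v l) = ∑ β ∈ (v l).support, coeff β (v l) • termV A β l := by
    conv_lhs => rw [← (v l).support_sum_monomial_coeff]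
    simp only [termV, ← Pi.single_smul, smul_monomial, smul_eq_mul, mul_one]
    exact map_sum (AddMonoidHom.single _ l) _ _
  rw [hl]
  exact sum_mem fun β hβ => M.smul_mem _ (h l β hβ)

theorem termV_mem_homogCompV {d : κ → ℤ} {α : Exp n} {k : κ} :
    termV A α k ∈ homogCompV A d ((degE α : ℤ) + d k) := by
  intro l β hβ
  rw [mem_support_iff, coeff_termV] at hβ
  obtain ⟨rfl, rfl⟩ := (ite_ne_right_iff.1 hβ).1
  rfl

theorem span_NUTerms_le_nuSupported (J : κ → Set (Exp n)) :
    Submodule.span A (NUTerms A J) ≤ nuSupported A J := by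
  rw [Submodule.span_le]
  rintro v ⟨k, α, hα, rfl⟩ l β hβ
  rw [mem_support_iff, coeff_termV] at hβ
  obtain ⟨rfl, rfl⟩ := (ite_ne_right_iff.1 hβ).1
  exact hα

theorem NUTermsDeg_subset_NUTerms (d : κ → ℤ) (J : κ → Set (Exp n)) (s : ℤ) :
    NUTermsDeg A d J s ⊆ NUTerms A J := by
  rintro v ⟨k, α, hα, -, rfl⟩
  exact ⟨k, α, hα, rfl⟩

theorem span_NUTermsDeg_le_homogCompV (d : κ → ℤ) (J : κ → Set (Exp n)) (s : ℤ) :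
    Submodule.span A (NUTermsDeg A d J s) ≤ homogCompV A d s := by
  rw [Submodule.span_le]
  rintro v ⟨k, α, -, rfl, rfl⟩
  exact termV_mem_homogCompV

end FreeModule

section MarkedSet

variable {κ : Type*} {A : Type*} [CommRing A]
  {d : κ → ℤ} {J : κ → Set (Exp n)} {P : κ → Finset (Exp n)}
  {gb : Exp n → κ → (κ → MvPolynomial (Fin (n+1)) A)}

theorem GSdeg_eq_image (s : ℤ) :
    GSdeg d P gb s = (fun i : κ × Exp n × Exp n => monomial i.2.2 (1 : A) • gb i.2.1 i.1) ''
      {i | i.2.1 ∈ P i.1 ∧ multExp i.2.1 i.2.2 ∧ (degE i.2.2 : ℤ) + degE i.2.1 + d i.1 = s} := by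
  ext v
  constructor
  · rintro ⟨k, α, hα, δ, hδ, hs, rfl⟩
    exact ⟨(k, α, δ), ⟨hα, hδ, hs⟩, rfl⟩
  · rintro ⟨⟨k, α, δ⟩, ⟨hα, hδ, hs⟩, rfl⟩
    exact ⟨k, α, hα, δ, hδ, hs, rfl⟩

variable [DecidableEq κ] {k k₀ : κ} {α α₀ δ δ₀ : Exp n}

theorem IsMarkedSetV.mem_homogCompV (hG : IsMarkedSetV d J P gb) (hα : α ∈ P k) :
    gb α k ∈ homogCompV A d ((degE α : ℤ) + d k) := by
  rw [← sub_add_cancel (gb α k) (termV A α k)]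
  exact add_mem (fun l β hβ => (hG k α hα l β hβ).2) termV_mem_homogCompV

theorem monomial_smul_eq_termV_add (δ : Exp n) (α : Exp n) (k : κ) :
    monomial δ (1 : A) • gb α k =
      termV A (δ + α) k + monomial δ (1 : A) • (gb α k - termV A α k) := by
  rw [smul_sub, monomial_smul_termV, add_sub_cancel]

theorem IsMarkedSetV.exists_of_mem_support_tail (hG : IsMarkedSetV d J P gb) (hα : α ∈ P k)
    {l : κ} {η : Exp n} (hη : η ∈ ((monomial δ (1 : A) • (gb α k - termV A α k)) l).support) :
    ∃ β, β ∉ J l ∧ (degE β : ℤ) + d l = (degE α : ℤ) + d k ∧ η = δ + β := by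
  obtain ⟨β, hβ, rfl⟩ := exists_eq_add_of_mem_support_monomial_mul hη
  exact ⟨β, (hG k α hα l β hβ).1, (hG k α hα l β hβ).2, rfl⟩

theorem IsMarkedSetV.coeff_head_monomial_smul (hJ : IsMonomialIdeal (J k₀))
    (hP : IsPommaretBasis (P k₀) (J k₀)) (hG : IsMarkedSetV d J P gb)
    (hα₀ : α₀ ∈ P k₀) (hδ₀ : multExp α₀ δ₀) (hα : α ∈ P k) (hδ : multExp α δ)
    (hmax : ¬ lexLt δ₀ δ) :
    coeff (α₀ + δ₀) ((monomial δ (1 : A) • gb α k) k₀) =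
      if (k, α, δ) = (k₀, α₀, δ₀) then 1 else 0 := by
  have htail : coeff (α₀ + δ₀) ((monomial δ (1 : A) • (gb α k - termV A α k)) k₀) = 0 := by
    by_contra hne
    obtain ⟨β, hβ, -, hη⟩ := hG.exists_of_mem_support_tail hα (mem_support_iff.2 hne)
    exact hmax (hP.lexLt_of_add_eq hJ hα₀ hδ₀ hβ hη.symm)
  rw [monomial_smul_eq_termV_add, Pi.add_apply, coeff_add, htail, add_zero, coeff_termV]
  refine if_congr ⟨?_, ?_⟩ rfl rfl
  · rintro ⟨rfl, h⟩
    obtain ⟨rfl, rfl⟩ := hP.eq_of_add_eq hα₀ hδ₀ hα hδ (h.trans (add_comm δ α))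
    rfl
  · rintro ⟨⟨⟩⟩
    exact ⟨rfl, add_comm α δ⟩

theorem span_GSdeg_le_GmodDeg [Fintype κ] (hG : IsMarkedSetV d J P gb) (s : ℤ) :
    Submodule.span A (GSdeg d P gb s) ≤ GmodDeg d P gb s := by
  rw [Submodule.span_le]
  rintro v ⟨k, α, hα, δ, -, rfl, rfl⟩
  refine Submodule.mem_inf.2 ⟨(GmodS P gb).smul_mem _ (Submodule.subset_span ⟨k, α, hα, rfl⟩), ?_⟩
  simpa only [add_assoc] using monomial_smul_mem_homogCompV (hG.mem_homogCompV hα) δ 1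

end MarkedSet

section SpanningAndIndependence

variable {κ : Type*} [DecidableEq κ] {A : Type*} [CommRing A]
  {d : κ → ℤ} {J : κ → Set (Exp n)} {P : κ → Finset (Exp n)}
  {gb : Exp n → κ → (κ → MvPolynomial (Fin (n+1)) A)}

theorem homogCompV_le_span_GSdeg_sup [Fintype κ] (hJ : ∀ k, IsMonomialIdeal (J k))
    (hP : ∀ k, IsPommaretBasis (P k) (J k)) (hG : IsMarkedSetV d J P gb) (s : ℤ) :
    homogCompV A d s ≤
      Submodule.span A (GSdeg d P gb s) ⊔ Submodule.span A (NUTermsDeg A d J s) := by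
  set M := Submodule.span A (GSdeg d P gb s) ⊔ Submodule.span A (NUTermsDeg A d J s)
  have hN : ∀ l η, η ∉ J l → (degE η : ℤ) + d l = s → termV A η l ∈ M := fun l η hη hs =>
    Submodule.mem_sup_right (Submodule.subset_span ⟨l, η, hη, hs, rfl⟩)
  have hU : ∀ δ k α, α ∈ P k → multExp α δ → (degE (α + δ) : ℤ) + d k = s →
      termV A (α + δ) k ∈ M := by
    intro δ
    induction δ using wellFounded_lexLt.induction with
    | _ δ ih =>
    intro k α hα hδ hs
    rw [degE_add, Nat.cast_add] at hs
    have hhead : monomial δ (1 : A) • gb α k ∈ M :=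
      Submodule.mem_sup_left (Submodule.subset_span ⟨k, α, hα, δ, hδ, by omega, rfl⟩)
    have htail : monomial δ (1 : A) • (gb α k - termV A α k) ∈ M := by
      refine mem_of_forall_termV_mem fun l η hη => ?_
      obtain ⟨β, hβ, hβs, rfl⟩ := hG.exists_of_mem_support_tail hα hη
      have hs' : (degE (δ + β) : ℤ) + d l = s := by
        rw [degE_add, Nat.cast_add]
        omega
      by_cases hδβ : δ + β ∈ J l
      · obtain ⟨α', hα', δ', hδ', he⟩ := ((hP l).1 _).1 hδβ
        rw [he] at hs' ⊢
        exact ih δ' ((hP l).lexLt_of_add_eq (hJ l) hα' hδ' hβ he) l α' hα' hδ' hs'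
      · exact hN l _ hδβ hs'
    simpa [monomial_smul_eq_termV_add, add_comm δ α] using M.sub_mem hhead htail
  refine fun f hf => mem_of_forall_termV_mem fun l γ hγ => ?_
  by_cases hγJ : γ ∈ J l
  · obtain ⟨α, hα, δ, hδ, rfl⟩ := ((hP l).1 γ).1 hγJ
    exact hU δ l α hα hδ (hf l _ hγ)
  · exact hN l γ hγJ (hf l γ hγ)

theorem eq_zero_of_mem_span_GSdeg_of_mem_nuSupported (hJ : ∀ k, IsMonomialIdeal (J k))
    (hP : ∀ k, IsPommaretBasis (P k) (J k)) (hG : IsMarkedSetV d J P gb) {s : ℤ}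
    {v : κ → MvPolynomial (Fin (n+1)) A} (hv : v ∈ Submodule.span A (GSdeg d P gb s))
    (hN : v ∈ nuSupported A J) : v = 0 := by
  rw [GSdeg_eq_image, Finsupp.mem_span_image_iff_linearCombination] at hv
  obtain ⟨c, hc, rfl⟩ := hv
  by_contra hne
  have hsupp : c.support.Nonempty := Finsupp.support_nonempty_iff.2 fun h => hne (by simp [h])
  obtain ⟨⟨k₀, α₀, δ₀⟩, hi₀, hmax⟩ := c.support.exists_max_image (fun i => toColex i.2.2) hsupp
  obtain ⟨hα₀, hδ₀, -⟩ := hc hi₀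
  have hhead : coeff (α₀ + δ₀) (Finsupp.linearCombination A
      (fun i : κ × Exp n × Exp n => monomial i.2.2 (1 : A) • gb i.2.1 i.1) c k₀) =
        c (k₀, α₀, δ₀) := by
    calc _ = ∑ i ∈ c.support,
            c i * coeff (α₀ + δ₀) ((monomial i.2.2 (1 : A) • gb i.2.1 i.1) k₀) := by
          simp [Finsupp.linearCombination_apply, Finsupp.sum, coeff_sum]
      _ = ∑ i ∈ c.support, c i * if i = (k₀, α₀, δ₀) then 1 else 0 :=
          Finset.sum_congr rfl fun i hi => by
            obtain ⟨hα, hδ, -⟩ := hc hi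
            rw [hG.coeff_head_monomial_smul (hJ k₀) (hP k₀) hα₀ hδ₀ hα hδ
              fun h => not_lt.2 (hmax i hi) (lexLt_iff_toColex_lt.1 h)]
      _ = c (k₀, α₀, δ₀) := by simp [hi₀]
  refine Finsupp.mem_support_iff.1 hi₀ (hhead ▸ ?_)
  by_contra h
  exact hN k₀ _ (mem_support_iff.2 h) ((hP k₀).add_mem hα₀ hδ₀)

end SpanningAndIndependence

section DegreePart

variable {κ : Type*} {A : Type*} [CommRing A] {d : κ → ℤ} {s : ℤ}
  {v : κ → MvPolynomial (Fin (n+1)) A}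

theorem weight_one_eq_degE (β : Exp n) : Finsupp.weight (1 : Fin (n+1) → ℤ) β = degE β := by
  simp [Finsupp.weight_apply, degE, Finsupp.sum]

variable (d s) in
/-- The projection onto `(S^m_d)_s`; weights in `ℤ` avoid truncating `s - d k`. -/
noncomputable def degPart :
    (κ → MvPolynomial (Fin (n+1)) A) →ₗ[A] (κ → MvPolynomial (Fin (n+1)) A) :=
  LinearMap.pi fun k =>
    (weightedHomogeneousComponent (1 : Fin (n+1) → ℤ) (s - d k)).comp (LinearMap.proj k)

theorem coeff_degPart (k : κ) (β : Exp n) :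
    coeff β (degPart d s v k) = if (degE β : ℤ) + d k = s then coeff β (v k) else 0 := by
  simp only [degPart, LinearMap.pi_apply, LinearMap.comp_apply, LinearMap.proj_apply,
    coeff_weightedHomogeneousComponent, weight_one_eq_degE]
  exact if_congr eq_sub_iff_add_eq rfl rfl

theorem degPart_mem_homogCompV : degPart d s v ∈ homogCompV A d s := by
  intro k β hβ
  rw [mem_support_iff, coeff_degPart] at hβ
  exact (ite_ne_right_iff.1 hβ).1

theorem degPart_mem_nuSupported {J : κ → Set (Exp n)} (hv : v ∈ nuSupported A J) :
    degPart d s v ∈ nuSupported A J := by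
  intro k β hβ
  rw [mem_support_iff, coeff_degPart] at hβ
  exact hv k β (mem_support_iff.2 (ite_ne_right_iff.1 hβ).2)

theorem eq_zero_of_forall_degPart_eq_zero (h : ∀ s, degPart d s v = 0) : v = 0 := by
  ext k β
  simpa [coeff_degPart] using congrArg (coeff β <| · k) (h ((degE β : ℤ) + d k))

theorem degPart_of_mem_homogCompV {t : ℤ} (hv : v ∈ homogCompV A d t) :
    degPart d s v = if s = t then v else 0 := by
  ext k β
  rw [coeff_degPart]
  by_cases hβ : β ∈ (v k).support
  · have := hv k β hβ
    split_ifs <;> simp_all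
  · have h0 := notMem_support_iff.1 hβ
    split_ifs <;> simp [h0]

open scoped Pointwise in
/-- As an `A`-module, `⟨G⟩` is spanned by the homogeneous elements `x^δ f_α^k`. -/
theorem degPart_mem_GmodS {J : κ → Set (Exp n)} {P : κ → Finset (Exp n)}
    {gb : Exp n → κ → (κ → MvPolynomial (Fin (n+1)) A)} [DecidableEq κ]
    (hG : IsMarkedSetV d J P gb) (hv : v ∈ GmodS P gb) : degPart d s v ∈ GmodS P gb := by
  have hspan : (GmodS P gb).restrictScalars A =
      Submodule.span A (Set.range (fun δ : Exp n => monomial δ (1 : A)) • GSet P gb) := by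
    rw [GmodS, Submodule.span_smul_of_span_eq_top]
    rw [← coe_basisMonomials]
    exact (basisMonomials _ A).span_eq
  rw [← Submodule.restrictScalars_mem A, hspan] at hv ⊢
  induction hv using Submodule.span_induction with
  | mem x hx =>
    obtain ⟨_, ⟨δ, rfl⟩, _, ⟨k, α, hα, rfl⟩, rfl⟩ := hx
    rw [degPart_of_mem_homogCompV (monomial_smul_mem_homogCompV (hG.mem_homogCompV hα) δ 1)]
    split_ifs
    · exact Submodule.subset_span ⟨_, ⟨δ, rfl⟩, _, ⟨k, α, hα, rfl⟩, rfl⟩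
    · exact zero_mem _
  | zero => simp
  | add x y _ _ hx hy => simpa using add_mem hx hy
  | smul a x _ hx => simpa using Submodule.smul_mem _ a hx

end DegreePart

section Characterization

variable {κ : Type*} [DecidableEq κ] {A : Type*} [CommRing A]
  {d : κ → ℤ} {J : κ → Set (Exp n)} {P : κ → Finset (Exp n)}
  {gb : Exp n → κ → (κ → MvPolynomial (Fin (n+1)) A)}

theorem GmodDeg_eq_span_GSdeg_of_inf_eq_bot [Fintype κ] (hJ : ∀ k, IsMonomialIdeal (J k))
    (hP : ∀ k, IsPommaretBasis (P k) (J k)) (hG : IsMarkedSetV d J P gb) {s : ℤ}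
    (h : GmodDeg d P gb s ⊓ Submodule.span A (NUTermsDeg A d J s) = ⊥) :
    GmodDeg d P gb s = Submodule.span A (GSdeg d P gb s) := by
  refine le_antisymm (fun f hf => ?_) (span_GSdeg_le_GmodDeg hG s)
  obtain ⟨g, hg, r, hr, rfl⟩ :=
    Submodule.mem_sup.1 (homogCompV_le_span_GSdeg_sup hJ hP hG s (Submodule.mem_inf.1 hf).2)
  have hrG : r ∈ GmodDeg d P gb s := by
    simpa using sub_mem hf (span_GSdeg_le_GmodDeg hG s hg)
  have hr0 : r = 0 := (Submodule.mem_bot A).1 (h ▸ Submodule.mem_inf.2 ⟨hrG, hr⟩)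
  simpa [hr0] using hg

theorem markedBasisProp_of_GmodDeg_eq [Fintype κ] (hJ : ∀ k, IsMonomialIdeal (J k))
    (hP : ∀ k, IsPommaretBasis (P k) (J k)) (hG : IsMarkedSetV d J P gb)
    (h : ∀ s, GmodDeg d P gb s = Submodule.span A (GSdeg d P gb s)) :
    MarkedBasisProp d J P gb := by
  intro s
  constructor
  · refine le_antisymm ?_ (sup_le inf_le_right (span_NUTermsDeg_le_homogCompV d J s))
    rw [h s]
    exact homogCompV_le_span_GSdeg_sup hJ hP hG s
  · refine eq_bot_iff.2 fun v hv => (Submodule.mem_bot A).2 ?_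
    rw [h s] at hv
    exact eq_zero_of_mem_span_GSdeg_of_mem_nuSupported hJ hP hG (Submodule.mem_inf.1 hv).1
      (span_NUTerms_le_nuSupported J
        (Submodule.span_mono (NUTermsDeg_subset_NUTerms d J s) (Submodule.mem_inf.1 hv).2))

theorem GmodS_inf_span_NUTerms_eq_bot (hJ : ∀ k, IsMonomialIdeal (J k))
    (hP : ∀ k, IsPommaretBasis (P k) (J k)) (hG : IsMarkedSetV d J P gb)
    (h : ∀ s, GmodDeg d P gb s = Submodule.span A (GSdeg d P gb s)) :
    (GmodS P gb).restrictScalars A ⊓ Submodule.span A (NUTerms A J) = ⊥ := by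
  refine eq_bot_iff.2 fun v hv => (Submodule.mem_bot A).2 ?_
  obtain ⟨hvG, hvN⟩ := Submodule.mem_inf.1 hv
  refine eq_zero_of_forall_degPart_eq_zero (d := d) fun s => ?_
  have hdeg : degPart d s v ∈ GmodDeg d P gb s :=
    Submodule.mem_inf.2 ⟨degPart_mem_GmodS hG hvG, degPart_mem_homogCompV⟩
  rw [h s] at hdeg
  exact eq_zero_of_mem_span_GSdeg_of_mem_nuSupported hJ hP hG hdeg
    (degPart_mem_nuSupported (span_NUTerms_le_nuSupported J hvN))

end Characterization

theorem statement8_general {n : ℕ} {κ : Type*} [Fintype κ] [DecidableEq κ]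
    {A : Type*} [CommRing A]
    (d : κ → ℤ) (J : κ → Set (Exp n)) (P : κ → Finset (Exp n))
    (hQS : ∀ k, IsMonomialIdeal (J k) ∧ IsPommaretBasis (P k) (J k))
    (gb : Exp n → κ → (κ → MvPolynomial (Fin (n+1)) A))
    (hG : IsMarkedSetV d J P gb) :
    (MarkedBasisProp d J P gb ↔
      ∀ s : ℤ, GmodDeg d P gb s = Submodule.span A (GSdeg d P gb s)) ∧
    ((∀ s : ℤ, GmodDeg d P gb s = Submodule.span A (GSdeg d P gb s)) ↔
      (GmodS P gb).restrictScalars A ⊓ Submodule.span A (NUTerms A J) = ⊥) := by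
  have hJ : ∀ k, IsMonomialIdeal (J k) := fun k => (hQS k).1
  have hP : ∀ k, IsPommaretBasis (P k) (J k) := fun k => (hQS k).2
  refine ⟨⟨fun hB s => GmodDeg_eq_span_GSdeg_of_inf_eq_bot hJ hP hG (hB s).2,
      markedBasisProp_of_GmodDeg_eq hJ hP hG⟩,
    ⟨GmodS_inf_span_NUTerms_eq_bot hJ hP hG, fun hN s => ?_⟩⟩
  refine GmodDeg_eq_span_GSdeg_of_inf_eq_bot hJ hP hG (eq_bot_iff.2 ?_)
  rw [← hN]
  exact inf_le_inf inf_le_left (Submodule.span_mono (NUTermsDeg_subset_NUTerms d J s))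

/-- Theorem `markedSetChar` (v) ⇔ (vi) ⇔ (vii): `G` is a marked basis iff
`⟨G⟩_s = ⟨G^(s)⟩^A` for all `s`, iff `N(U,⟨G⟩) = 0`. -/
theorem statement8 {n : ℕ} {κ : Type*} [Fintype κ] [DecidableEq κ] (hm : Nonempty κ)
    {A : Type*} [CommRing A] [IsNoetherianRing A]
    (d : κ → ℤ) (J : κ → Set (Exp n)) (P : κ → Finset (Exp n))
    (hQS : ∀ k, IsMonomialIdeal (J k) ∧ IsPommaretBasis (P k) (J k))
    (gb : Exp n → κ → (κ → MvPolynomial (Fin (n+1)) A))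
    (hG : IsMarkedSetV d J P gb) :
    (MarkedBasisProp d J P gb ↔
      ∀ s : ℤ, GmodDeg d P gb s = Submodule.span A (GSdeg d P gb s)) ∧
    ((∀ s : ℤ, GmodDeg d P gb s = Submodule.span A (GSdeg d P gb s)) ↔
      (GmodS P gb).restrictScalars A ⊓ Submodule.span A (NUTerms A J) = ⊥) :=
  statement8_general d J P hQS gb hG

end MB
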